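/- arXiv:1805.04606 — 3 statements merged into one kernel-verified Lean document; each statement's English description precedes it below -/
import Mathlib

section
/- (Open-loop feasibility transfer, deterministic core of Remark 2) Let F ∈ ℝ^(c×s), G_w ∈ ℝ^(s×q), and let d ∈ ℝ^s be a fixed vector (representing G_x x_0 + G_u V). Let W^(1), …, W^(N̂) ∈ ℝ^q be the truncated samples and let 𝕎_N ⊆ ℝ^q be a finite set of samples containing them. Define X(W) = d + G_w W and suppose ε ∈ ℝ^c with ε ≥ 0 satisfies: for every W ∈ 𝕎_N there exist convex coefficients α ∈ ℂ such that for every row k, |(F G_w W − Σ_{i=1}^{N̂} α_i F G_w W^(i))_k| ≤ ε_k. If the buffered constraints F X(W^(i)) ≤ 1 − ε hold componentwise for all i = 1,…,N̂, then the original constraints F X(W) ≤ 1 hold componentwise for every W ∈ 𝕎_N. -/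
open Matrix

/-!
Fix a sample `W` and let `α` be the convex coefficients approximating it. Since
`X` is affine and `∑ α i = 1`, the combination `∑ α i • F X(W⁽ⁱ⁾)` equals `F d + ∑ α i • F G_w W⁽ⁱ⁾`,
and, as an average of vectors satisfying the buffered bound `≤ 1 - ε`, it satisfies that bound too.
The approximation error moves `F X(W)` at most `ε` above this combination, so `F X(W) ≤ 1`.
-/

section BufferedConstraint

variable {𝕜 E ι : Type*} [Semiring 𝕜] [PartialOrder 𝕜]
  [AddCommGroup E] [PartialOrder E] [IsOrderedAddMonoid E] [Module 𝕜 E] [PosSMulMono 𝕜 E]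

theorem add_sum_smul_le_of_forall_add_le {s : Finset ι} {α : ι → 𝕜}
    (hα₀ : ∀ i ∈ s, 0 ≤ α i) (hα₁ : ∑ i ∈ s, α i = 1) {a b : E} {y : ι → E}
    (hy : ∀ i ∈ s, a + y i ≤ b) :
    a + ∑ i ∈ s, α i • y i ≤ b :=
  calc a + ∑ i ∈ s, α i • y i = ∑ i ∈ s, α i • (a + y i) := by
        simp only [smul_add, Finset.sum_add_distrib, ← Finset.sum_smul, hα₁, one_smul]
    _ ≤ ∑ i ∈ s, α i • b :=
        Finset.sum_le_sum fun i hi => smul_le_smul_of_nonneg_left (hy i hi) (hα₀ i hi)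
    _ = b := by rw [← Finset.sum_smul, hα₁, one_smul]

theorem add_le_of_sub_sum_smul_le {s : Finset ι} {α : ι → 𝕜}
    (hα₀ : ∀ i ∈ s, 0 ≤ α i) (hα₁ : ∑ i ∈ s, α i = 1) {a x u ε : E} {y : ι → E}
    (happrox : x - ∑ i ∈ s, α i • y i ≤ ε) (hbuf : ∀ i ∈ s, a + y i ≤ u - ε) :
    a + x ≤ u :=
  calc a + x ≤ a + (ε + ∑ i ∈ s, α i • y i) := add_le_add_right (sub_le_iff_le_add.mp happrox) a
    _ = (a + ∑ i ∈ s, α i • y i) + ε := by abel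
    _ ≤ (u - ε) + ε := add_le_add_left (add_sum_smul_le_of_forall_add_le hα₀ hα₁ hbuf) ε
    _ = u := sub_add_cancel u ε

end BufferedConstraint

theorem open_loop_feasibility_transfer_general
    (c s q Nhat : ℕ)
    (F : Matrix (Fin c) (Fin s) ℝ) (Gw : Matrix (Fin s) (Fin q) ℝ)
    (d : Fin s → ℝ)
    (Wsamp : Fin Nhat → Fin q → ℝ) (WN : Finset (Fin q → ℝ))
    (X : (Fin q → ℝ) → Fin s → ℝ) (hX : ∀ W, X W = d + Gw.mulVec W)
    (ε : Fin c → ℝ)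
    (happrox : ∀ W ∈ WN, ∃ α : Fin Nhat → ℝ,
      (∀ i, 0 ≤ α i) ∧ (∑ i, α i = 1) ∧
      ∀ k : Fin c,
        |(F.mulVec (Gw.mulVec W) -
            ∑ i, α i • F.mulVec (Gw.mulVec (Wsamp i))) k| ≤ ε k)
    (hbuf : ∀ (i : Fin Nhat) (k : Fin c), F.mulVec (X (Wsamp i)) k ≤ 1 - ε k) :
    ∀ W ∈ WN, ∀ k : Fin c, F.mulVec (X W) k ≤ 1 := by
  have hsplit : ∀ W, F *ᵥ X W = F *ᵥ d + F *ᵥ (Gw *ᵥ W) := fun W => by rw [hX, mulVec_add]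
  intro W hW
  obtain ⟨α, hα₀, hα₁, herr⟩ := happrox W hW
  have hfeas : F *ᵥ X W ≤ 1 := by
    rw [hsplit]
    refine add_le_of_sub_sum_smul_le (fun i _ => hα₀ i) hα₁ (fun k => (le_abs_self _).trans (herr k))
      fun i _ k => ?_
    rw [← hsplit]
    exact hbuf i k
  exact hfeas

/-- Open-loop feasibility transfer (deterministic core of Remark 2): with
`X(W) = d + G_w W`, if every sample `W ∈ 𝕎_N` is, after the uncertainty mapping
`F G_w`, componentwise within `ε` of a convex combination of the truncated
samples `W⁽ⁱ⁾`, and the buffered constraints `F X(W⁽ⁱ⁾) ≤ 1 − ε` hold, then the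
original constraints `F X(W) ≤ 1` hold for every `W ∈ 𝕎_N`. -/
theorem open_loop_feasibility_transfer
    (c s q Nhat : ℕ) (hNhat : 0 < Nhat)
    (F : Matrix (Fin c) (Fin s) ℝ) (Gw : Matrix (Fin s) (Fin q) ℝ)
    (d : Fin s → ℝ)
    (Wsamp : Fin Nhat → Fin q → ℝ) (WN : Finset (Fin q → ℝ))
    (hWsub : ∀ i, Wsamp i ∈ WN)
    (X : (Fin q → ℝ) → Fin s → ℝ) (hX : ∀ W, X W = d + Gw.mulVec W)
    (ε : Fin c → ℝ) (hε : ∀ k, 0 ≤ ε k)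
    (happrox : ∀ W ∈ WN, ∃ α : Fin Nhat → ℝ,
      (∀ i, 0 ≤ α i) ∧ (∑ i, α i = 1) ∧
      ∀ k : Fin c,
        |(F.mulVec (Gw.mulVec W) -
            ∑ i, α i • F.mulVec (Gw.mulVec (Wsamp i))) k| ≤ ε k)
    (hbuf : ∀ (i : Fin Nhat) (k : Fin c), F.mulVec (X (Wsamp i)) k ≤ 1 - ε k) :
    ∀ W ∈ WN, ∀ k : Fin c, F.mulVec (X W) k ≤ 1 :=
  open_loop_feasibility_transfer_general c s q Nhat F Gw d Wsamp WN X hX ε happrox hbuf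
end

section
/- (Closed-loop state feasibility transfer; deterministic core of Theorem 1 for state constraints) Let F ∈ ℝ^(c×s), G_u ∈ ℝ^(s×r), G_w ∈ ℝ^(s×q), K ∈ ℝ^(r×q), and d ∈ ℝ^s (representing G_x x_0 + G_u V). Define X(W) = d + (G_u K + G_w) W. Suppose there are a matrix H ∈ ℝ^(z×q) and, for each row k of F, a vector κ_k ∈ ℝ^z such that row k of F G_u K equals κ_kᵀ H. Let W^(1), …, W^(N̂) ∈ ℝ^q be the truncated samples and 𝕎_N ⊇ {W^(1),…,W^(N̂)} a finite sample set. Assume ε_cl ≥ 0 and ε_ol ∈ ℝ^c with ε_ol ≥ 0 satisfy: for every W ∈ 𝕎_N there exist convex coefficients α ∈ ℂ with ‖H (W − Σ_i α_i W^(i))‖_∞ ≤ ε_cl and, for every row k, |(F G_w (W − Σ_i α_i W^(i)))_k| ≤ (ε_ol)_k. If the buffered constraints (F X(W^(i)))_k ≤ 1 − ‖κ_k‖_1 · ε_cl − (ε_ol)_k hold for all i = 1,…,N̂ and all rows k, then the original constraints F X(W) ≤ 1 hold componentwise for every W ∈ 𝕎_N. -/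
open Matrix

/-!
Write `Δ = W - ∑ i, α i • W⁽ⁱ⁾`. Since `Σ α = 1` and `W ↦ F X(W)` is affine, `F X(W)` is the
convex combination `∑ α i • F X(W⁽ⁱ⁾)` plus the deviation `F G_u K Δ + F G_w Δ`. Its `k`-th row
is `κ_k ⬝ᵥ H Δ + (F G_w Δ)_k ≤ ‖κ_k‖₁ ε_cl + (ε_ol)_k`, which is exactly the buffer that the
convex combination of the sampled constraints leaves below `1`.
-/

section

variable {ι m n : Type*} [Fintype ι] [Fintype n]

theorem sum_mul_le_of_sum_eq_one {α a : ι → ℝ} {b : ℝ} (hα : ∀ i, 0 ≤ α i)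
    (hα₁ : ∑ i, α i = 1) (ha : ∀ i, a i ≤ b) : ∑ i, α i * a i ≤ b :=
  (convex_Iic b).sum_mem (fun i _ => hα i) hα₁ (fun i _ => ha i)

theorem Matrix.dotProduct_le_sum_abs_mul_norm (v w : n → ℝ) :
    v ⬝ᵥ w ≤ (∑ i, |v i|) * ‖w‖ := by
  rw [dotProduct, Finset.sum_mul]
  refine Finset.sum_le_sum fun i _ => ?_
  calc v i * w i ≤ |v i| * |w i| := abs_mul (v i) (w i) ▸ le_abs_self _
    _ ≤ |v i| * ‖w‖ := by
      gcongr
      exact (Real.norm_eq_abs (w i)).symm.trans_le (norm_le_pi_norm w i)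

theorem Matrix.mulVec_apply_le_of_row_eq_vecMul {l : Type*} [Fintype l]
    {A : Matrix m n ℝ} {H : Matrix l n ℝ} {κ : l → ℝ} {k : m} {v : n → ℝ} {ε : ℝ}
    (hA : A k = vecMul κ H) (hv : ‖H *ᵥ v‖ ≤ ε) : (A *ᵥ v) k ≤ (∑ t, |κ t|) * ε :=
  calc (A *ᵥ v) k = κ ⬝ᵥ H *ᵥ v := by rw [mulVec, hA, dotProduct_mulVec]
    _ ≤ (∑ t, |κ t|) * ‖H *ᵥ v‖ := dotProduct_le_sum_abs_mul_norm κ _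
    _ ≤ (∑ t, |κ t|) * ε := by gcongr

theorem Matrix.add_mulVec_eq_sum_smul_add_mulVec_sub {R : Type*} [CommRing R]
    (e : m → R) (M : Matrix m n R) (W : n → R) (w : ι → n → R) {α : ι → R}
    (hα₁ : ∑ i, α i = 1) :
    e + M *ᵥ W = ∑ i, α i • (e + M *ᵥ w i) + M *ᵥ (W - ∑ i, α i • w i) := by
  simp only [smul_add, Finset.sum_add_distrib, ← Finset.sum_smul, hα₁, one_smul, mulVec_sub,
    mulVec_sum, mulVec_smul]
  abel

end

theorem closed_loop_state_feasibility_transfer_general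
    (c s r q z Nhat : ℕ)
    (F : Matrix (Fin c) (Fin s) ℝ) (Gu : Matrix (Fin s) (Fin r) ℝ)
    (Gw : Matrix (Fin s) (Fin q) ℝ) (K : Matrix (Fin r) (Fin q) ℝ)
    (d : Fin s → ℝ)
    (X : (Fin q → ℝ) → Fin s → ℝ)
    (hX : ∀ W, X W = d + (Gu * K + Gw).mulVec W)
    (H : Matrix (Fin z) (Fin q) ℝ) (κ : Fin c → Fin z → ℝ)
    (hreorder : ∀ k : Fin c, (F * Gu * K) k = Matrix.vecMul (κ k) H)
    (Wsamp : Fin Nhat → Fin q → ℝ) (WN : Finset (Fin q → ℝ))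
    (εcl : ℝ) (εol : Fin c → ℝ)
    (happrox : ∀ W ∈ WN, ∃ α : Fin Nhat → ℝ,
      (∀ i, 0 ≤ α i) ∧ (∑ i, α i = 1) ∧
      ‖H.mulVec (W - ∑ i, α i • Wsamp i)‖ ≤ εcl ∧
      ∀ k : Fin c, |((F * Gw).mulVec (W - ∑ i, α i • Wsamp i)) k| ≤ εol k)
    (hbuf : ∀ (i : Fin Nhat) (k : Fin c),
      F.mulVec (X (Wsamp i)) k ≤ 1 - (∑ t, |κ k t|) * εcl - εol k) :
    ∀ W ∈ WN, ∀ k : Fin c, F.mulVec (X W) k ≤ 1 := by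
  intro W hW k
  obtain ⟨α, hα, hα₁, hcl, hol⟩ := happrox W hW
  have hFX : ∀ V, F *ᵥ X V = F *ᵥ d + (F * Gu * K + F * Gw) *ᵥ V := fun V => by
    rw [hX, mulVec_add, mulVec_mulVec, Matrix.mul_add, Matrix.mul_assoc]
  have hsplit : (F *ᵥ X W) k = ∑ i, α i * (F *ᵥ X (Wsamp i)) k
      + ((F * Gu * K) *ᵥ (W - ∑ i, α i • Wsamp i)) k
      + ((F * Gw) *ᵥ (W - ∑ i, α i • Wsamp i)) k := by
    rw [hFX W, add_mulVec_eq_sum_smul_add_mulVec_sub _ _ W Wsamp hα₁]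
    simp only [← hFX]
    simp only [add_mulVec, Pi.add_apply, Finset.sum_apply, Pi.smul_apply, smul_eq_mul,
      add_assoc]
  have hsamples := sum_mul_le_of_sum_eq_one hα hα₁ (hbuf · k)
  have hclosed := mulVec_apply_le_of_row_eq_vecMul (hreorder k) hcl
  have hopen := (le_abs_self _).trans (hol k)
  linarith

/-- Closed-loop state feasibility transfer (deterministic core of Theorem 1 for
state constraints): with `X(W) = d + (G_u K + G_w) W`, a reordering of each row
of `F G_u K` as `κ_kᵀ H`, and truncation errors bounded by `ε_cl` and `ε_ol`,
the buffered constraints `(F X(W⁽ⁱ⁾))_k ≤ 1 − ‖κ_k‖₁ ε_cl − (ε_ol)_k` on the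
truncated samples imply the original constraints `F X(W) ≤ 1` on all samples. -/
theorem closed_loop_state_feasibility_transfer
    (c s r q z Nhat : ℕ) (hNhat : 0 < Nhat)
    (F : Matrix (Fin c) (Fin s) ℝ) (Gu : Matrix (Fin s) (Fin r) ℝ)
    (Gw : Matrix (Fin s) (Fin q) ℝ) (K : Matrix (Fin r) (Fin q) ℝ)
    (d : Fin s → ℝ)
    (X : (Fin q → ℝ) → Fin s → ℝ)
    (hX : ∀ W, X W = d + (Gu * K + Gw).mulVec W)
    (H : Matrix (Fin z) (Fin q) ℝ) (κ : Fin c → Fin z → ℝ)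
    (hreorder : ∀ k : Fin c, (F * Gu * K) k = Matrix.vecMul (κ k) H)
    (Wsamp : Fin Nhat → Fin q → ℝ) (WN : Finset (Fin q → ℝ))
    (hWsub : ∀ i, Wsamp i ∈ WN)
    (εcl : ℝ) (hεcl : 0 ≤ εcl) (εol : Fin c → ℝ) (hεol : ∀ k, 0 ≤ εol k)
    (happrox : ∀ W ∈ WN, ∃ α : Fin Nhat → ℝ,
      (∀ i, 0 ≤ α i) ∧ (∑ i, α i = 1) ∧
      ‖H.mulVec (W - ∑ i, α i • Wsamp i)‖ ≤ εcl ∧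
      ∀ k : Fin c, |((F * Gw).mulVec (W - ∑ i, α i • Wsamp i)) k| ≤ εol k)
    (hbuf : ∀ (i : Fin Nhat) (k : Fin c),
      F.mulVec (X (Wsamp i)) k ≤ 1 - (∑ t, |κ k t|) * εcl - εol k) :
    ∀ W ∈ WN, ∀ k : Fin c, F.mulVec (X W) k ≤ 1 :=
  closed_loop_state_feasibility_transfer_general c s r q z Nhat F Gu Gw K d X hX H κ hreorder Wsamp
    WN εcl εol happrox hbuf
end

section
/- (Closed-loop input feasibility transfer; deterministic core of Theorem 1 for input constraints) Let F_u ∈ ℝ^(c×r), K ∈ ℝ^(r×q), V ∈ ℝ^r, and define U(W) = K W + V. Suppose there are a matrix H_u ∈ ℝ^(z×q) and, for each row k of F_u, a vector κ_k ∈ ℝ^z such that row k of F_u K equals κ_kᵀ H_u. Let W^(1), …, W^(N̂) ∈ ℝ^q be the truncated samples and 𝕎_N ⊇ {W^(1),…,W^(N̂)} a finite sample set. Assume ε_u ≥ 0 satisfies: for every W ∈ 𝕎_N there exist convex coefficients α ∈ ℂ with ‖H_u (W − Σ_i α_i W^(i))‖_∞ ≤ ε_u. If the buffered input constraints (F_u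 U(W^(i)))_k ≤ 1 − ‖κ_k‖_1 · ε_u hold for all i = 1,…,N̂ and all rows k, then the original input constraints F_u U(W) ≤ 1 hold componentwise for every W ∈ 𝕎_N. -/
/-!
Writing `g_k(W) = (F_u U(W))_k`, the reordering makes `g_k` affine with linear part
`W ↦ κ_k ⬝ᵥ H_u W`. For a sample `W` with convex coefficients `α`, put
`W̄ = Σ_i α_i W⁽ⁱ⁾`. Affinity gives `g_k(W̄) = Σ_i α_i g_k(W⁽ⁱ⁾) ≤ 1 − ‖κ_k‖₁ ε_u`, and
Hölder's inequality for the `ℓ¹`/`ℓ^∞` pairing bounds the remainder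
`g_k(W) − g_k(W̄) = κ_k ⬝ᵥ H_u (W − W̄)` by `‖κ_k‖₁ ε_u`.
-/

open Matrix Finset

section

variable {ι n : Type*} [Fintype ι] [Fintype n]

theorem abs_dotProduct_le_sum_abs_mul_norm (κ x : n → ℝ) :
    |κ ⬝ᵥ x| ≤ (∑ t, |κ t|) * ‖x‖ :=
  calc |κ ⬝ᵥ x| ≤ ∑ t, |κ t * x t| := abs_sum_le_sum_abs _ _
    _ ≤ ∑ t, |κ t| * ‖x‖ := sum_le_sum fun t _ => by
          rw [abs_mul]
          exact mul_le_mul_of_nonneg_left (norm_le_pi_norm x t) (abs_nonneg _)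
    _ = (∑ t, |κ t|) * ‖x‖ := (sum_mul _ _ _).symm

theorem dotProduct_sum_smul_add_of_sum_eq_one (a : n → ℝ) (b : ℝ) (w : ι → n → ℝ)
    {α : ι → ℝ} (hα : ∑ i, α i = 1) :
    a ⬝ᵥ (∑ i, α i • w i) + b = ∑ i, α i * (a ⬝ᵥ w i + b) := by
  simp only [dotProduct_sum, dotProduct_smul, smul_eq_mul, mul_add, sum_add_distrib,
    ← sum_mul, hα, one_mul]

theorem dotProduct_add_le_of_le_convexCombination (a : n → ℝ) (b M δ : ℝ) (w : ι → n → ℝ)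
    {α : ι → ℝ} (hα₀ : ∀ i, 0 ≤ α i) (hα₁ : ∑ i, α i = 1)
    (hw : ∀ i, a ⬝ᵥ w i + b ≤ M - δ) {x : n → ℝ}
    (hx : a ⬝ᵥ (x - ∑ i, α i • w i) ≤ δ) :
    a ⬝ᵥ x + b ≤ M := by
  have hmean : a ⬝ᵥ (∑ i, α i • w i) + b ≤ M - δ :=
    calc a ⬝ᵥ (∑ i, α i • w i) + b = ∑ i, α i * (a ⬝ᵥ w i + b) :=
          dotProduct_sum_smul_add_of_sum_eq_one a b w hα₁
      _ ≤ ∑ i, α i * (M - δ) := sum_le_sum fun i _ => mul_le_mul_of_nonneg_left (hw i) (hα₀ i)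
      _ = M - δ := by rw [← sum_mul, hα₁, one_mul]
  rw [dotProduct_sub] at hx
  linarith

end

theorem mulVec_mulVec_add_apply {m l o : Type*} [Fintype l] [Fintype o]
    (F : Matrix m l ℝ) (K : Matrix l o ℝ) (V : l → ℝ) (W : o → ℝ) (k : m) :
    (F *ᵥ (K *ᵥ W + V)) k = (F * K) k ⬝ᵥ W + (F *ᵥ V) k := by
  rw [mulVec_add, mulVec_mulVec, Pi.add_apply]
  rfl

theorem closed_loop_input_feasibility_transfer_general
    (c r q z Nhat : ℕ)
    (Fu : Matrix (Fin c) (Fin r) ℝ) (K : Matrix (Fin r) (Fin q) ℝ)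
    (V : Fin r → ℝ)
    (U : (Fin q → ℝ) → Fin r → ℝ) (hU : ∀ W, U W = K.mulVec W + V)
    (Hu : Matrix (Fin z) (Fin q) ℝ) (κ : Fin c → Fin z → ℝ)
    (hreorder : ∀ k : Fin c, (Fu * K) k = Matrix.vecMul (κ k) Hu)
    (Wsamp : Fin Nhat → Fin q → ℝ) (WN : Finset (Fin q → ℝ))
    (εu : ℝ)
    (happrox : ∀ W ∈ WN, ∃ α : Fin Nhat → ℝ,
      (∀ i, 0 ≤ α i) ∧ (∑ i, α i = 1) ∧
      ‖Hu.mulVec (W - ∑ i, α i • Wsamp i)‖ ≤ εu)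
    (hbuf : ∀ (i : Fin Nhat) (k : Fin c),
      Fu.mulVec (U (Wsamp i)) k ≤ 1 - (∑ t, |κ k t|) * εu) :
    ∀ W ∈ WN, ∀ k : Fin c, Fu.mulVec (U W) k ≤ 1 := by
  intro W hW k
  obtain ⟨α, hα₀, hα₁, hW_approx⟩ := happrox W hW
  have hrow : ∀ X, (Fu *ᵥ U X) k = (κ k ᵥ* Hu) ⬝ᵥ X + (Fu *ᵥ V) k := fun X => by
    rw [hU, mulVec_mulVec_add_apply, hreorder]
  rw [hrow]
  refine dotProduct_add_le_of_le_convexCombination _ _ _ _ Wsamp hα₀ hα₁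
    (fun i => hrow (Wsamp i) ▸ hbuf i k) ?_
  rw [← dotProduct_mulVec]
  calc κ k ⬝ᵥ (Hu *ᵥ (W - ∑ i, α i • Wsamp i))
      ≤ (∑ t, |κ k t|) * ‖Hu *ᵥ (W - ∑ i, α i • Wsamp i)‖ :=
        (le_abs_self _).trans (abs_dotProduct_le_sum_abs_mul_norm _ _)
    _ ≤ (∑ t, |κ k t|) * εu :=
        mul_le_mul_of_nonneg_left hW_approx (sum_nonneg fun t _ => abs_nonneg _)

/-- Closed-loop input feasibility transfer (deterministic core of Theorem 1 for
input constraints): with `U(W) = K W + V`, a reordering of each row of `F_u K`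
as `κ_kᵀ H_u`, and truncation error bounded by `ε_u`, the buffered input
constraints `(F_u U(W⁽ⁱ⁾))_k ≤ 1 − ‖κ_k‖₁ ε_u` on the truncated samples imply
the original input constraints `F_u U(W) ≤ 1` on all samples. -/
theorem closed_loop_input_feasibility_transfer
    (c r q z Nhat : ℕ) (hNhat : 0 < Nhat)
    (Fu : Matrix (Fin c) (Fin r) ℝ) (K : Matrix (Fin r) (Fin q) ℝ)
    (V : Fin r → ℝ)
    (U : (Fin q → ℝ) → Fin r → ℝ) (hU : ∀ W, U W = K.mulVec W + V)
    (Hu : Matrix (Fin z) (Fin q) ℝ) (κ : Fin c → Fin z → ℝ)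
    (hreorder : ∀ k : Fin c, (Fu * K) k = Matrix.vecMul (κ k) Hu)
    (Wsamp : Fin Nhat → Fin q → ℝ) (WN : Finset (Fin q → ℝ))
    (hWsub : ∀ i, Wsamp i ∈ WN)
    (εu : ℝ) (hεu : 0 ≤ εu)
    (happrox : ∀ W ∈ WN, ∃ α : Fin Nhat → ℝ,
      (∀ i, 0 ≤ α i) ∧ (∑ i, α i = 1) ∧
      ‖Hu.mulVec (W - ∑ i, α i • Wsamp i)‖ ≤ εu)
    (hbuf : ∀ (i : Fin Nhat) (k : Fin c),
      Fu.mulVec (U (Wsamp i)) k ≤ 1 - (∑ t, |κ k t|) * εu) :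
    ∀ W ∈ WN, ∀ k : Fin c, Fu.mulVec (U W) k ≤ 1 :=
  closed_loop_input_feasibility_transfer_general c r q z Nhat Fu K V U hU Hu κ hreorder Wsamp WN εu
    happrox hbuf
end
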